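/- arXiv:2205.10823 — 7 statements merged into one kernel-verified Lean document; each statement's English description precedes it below -/
import Mathlib

section
/- If z_1, ..., z_n are complex numbers with |arg(z_i)| ≤ θ < π/2 for all i, then |z_1 ⋯ z_n|^{1/n} ≤ (1/(n cos θ)) |z_1 + ⋯ + z_n|. -/
open Real Complex

/-!
Every `z` with `|arg z| ≤ θ` satisfies `cos θ * ‖z‖ ≤ re z`, so summing gives
`cos θ * ∑ ‖zᵢ‖ ≤ re (∑ zᵢ) ≤ ‖∑ zᵢ‖`; combine this with the real AM-GM inequality
for the moduli `‖zᵢ‖`.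
-/

open Finset

theorem Real.prod_rpow_inv_card_le_sum_div_card {ι : Type*} (s : Finset ι) (hs : s.Nonempty)
    (x : ι → ℝ) (hx : ∀ i ∈ s, 0 ≤ x i) :
    (∏ i ∈ s, x i) ^ ((#s : ℝ)⁻¹) ≤ (∑ i ∈ s, x i) / #s := by
  simpa using Real.geom_mean_le_arith_mean s (fun _ => 1) x (fun _ _ => zero_le_one)
    (by simpa using hs) hx

namespace Complex

theorem cos_mul_norm_le_re {z : ℂ} {θ : ℝ} (hθ : θ ≤ π) (hz : |z.arg| ≤ θ) :
    Real.cos θ * ‖z‖ ≤ z.re := by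
  rw [← norm_mul_cos_arg, mul_comm, ← Real.cos_abs z.arg]
  exact mul_le_mul_of_nonneg_left
    (Real.cos_le_cos_of_nonneg_of_le_pi (abs_nonneg _) hθ hz) (norm_nonneg z)

theorem cos_mul_sum_norm_le_norm_sum {ι : Type*} (s : Finset ι) (z : ι → ℂ) {θ : ℝ}
    (hθ : θ ≤ π) (hz : ∀ i ∈ s, |(z i).arg| ≤ θ) :
    Real.cos θ * ∑ i ∈ s, ‖z i‖ ≤ ‖∑ i ∈ s, z i‖ :=
  calc Real.cos θ * ∑ i ∈ s, ‖z i‖ = ∑ i ∈ s, Real.cos θ * ‖z i‖ := mul_sum ..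
    _ ≤ ∑ i ∈ s, (z i).re := sum_le_sum fun i hi => cos_mul_norm_le_re hθ (hz i hi)
    _ = (∑ i ∈ s, z i).re := (re_sum ..).symm
    _ ≤ ‖∑ i ∈ s, z i‖ := re_le_norm _

end Complex

theorem generalized_am_gm_complex (n : ℕ) (hn : 0 < n) (θ : ℝ) (hθ₀ : 0 ≤ θ)
    (hθ : θ < π / 2) (z : Fin n → ℂ) (h : ∀ i, |(z i).arg| ≤ θ) :
    ‖∏ i, z i‖ ^ ((n : ℝ)⁻¹) ≤
      (1 / (n * Real.cos θ)) * ‖∑ i, z i‖ := by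
  have hcos : 0 < Real.cos θ := Real.cos_pos_of_mem_Ioo ⟨by linarith [Real.pi_pos], hθ⟩
  have hn' : (0 : ℝ) < n := by exact_mod_cast hn
  calc ‖∏ i, z i‖ ^ ((n : ℝ)⁻¹) ≤ (∑ i, ‖z i‖) / n := by
        simpa [norm_prod] using Real.prod_rpow_inv_card_le_sum_div_card univ
          (univ_nonempty_iff.2 ⟨⟨0, hn⟩⟩) _ fun i _ => norm_nonneg (z i)
    _ = 1 / (n * Real.cos θ) * (Real.cos θ * ∑ i, ‖z i‖) := by field_simp
    _ ≤ 1 / (n * Real.cos θ) * ‖∑ i, z i‖ := by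
        gcongr
        exact Complex.cos_mul_sum_norm_le_norm_sum _ _ (by linarith [Real.pi_pos]) fun i _ => h i
end

section
/- Let A be an n×n real matrix with positive diagonal entries a_{ii} > 0, and suppose that for some θ with 0 ≤ θ < π/2, every eigenvalue λ of DA (for every positive diagonal matrix D) satisfies |arg(λ)| ≤ θ. Then det A ≤ (1/cos^n θ) ∏_{i=1}^n a_{ii}. -/
open Real Complex Matrix

/-!
Scaling the rows of `A` by `D = diag(1 / a_ii)` gives a matrix `B = DA` with unit diagonal, so its
eigenvalues `μ_k` have `∑ Re μ_k = tr B = n`. Each `μ_k` lies in the sector `|arg z| ≤ θ`, where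
`|z| cos θ ≤ Re z`; hence `∑ |μ_k| ≤ n / cos θ`, and AM-GM gives
`|det B| = ∏ |μ_k| ≤ cos⁻ⁿ θ`. Finally `det A = (∏ a_ii) det B`.
-/

theorem Real.prod_le_mean_pow {ι : Type*} (s : Finset ι) (z : ι → ℝ) (hz : ∀ i ∈ s, 0 ≤ z i) :
    ∏ i ∈ s, z i ≤ ((∑ i ∈ s, z i) / s.card) ^ s.card := by
  rcases s.eq_empty_or_nonempty with rfl | hs
  · simp
  have hcard : (0 : ℝ) < s.card := by exact_mod_cast hs.card_pos
  have hgm := Real.geom_mean_le_arith_mean s (fun _ => 1) z (fun _ _ => zero_le_one)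
    (by simpa using hcard) hz
  simp only [Real.rpow_one, one_mul, Finset.sum_const, nsmul_eq_mul, mul_one] at hgm
  have hprod : 0 ≤ ∏ i ∈ s, z i := Finset.prod_nonneg hz
  calc ∏ i ∈ s, z i = ((∏ i ∈ s, z i) ^ ((s.card : ℝ)⁻¹)) ^ s.card :=
        (Real.rpow_inv_natCast_pow hprod hs.card_pos.ne').symm
    _ ≤ _ := pow_le_pow_left₀ (Real.rpow_nonneg hprod _) hgm _

theorem Complex.norm_mul_cos_le_re {z : ℂ} {θ : ℝ} (hz : |z.arg| ≤ θ) (hθ : θ ≤ π) :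
    ‖z‖ * Real.cos θ ≤ z.re := by
  calc ‖z‖ * Real.cos θ ≤ ‖z‖ * Real.cos z.arg := by
        gcongr
        rw [← Real.cos_abs z.arg]
        exact Real.cos_le_cos_of_nonneg_of_le_pi (abs_nonneg _) hθ hz
    _ = z.re := Complex.norm_mul_cos_arg z

theorem Complex.norm_prod_le_of_abs_arg_le {ι : Type*} (s : Finset ι) (z : ι → ℂ) {θ : ℝ}
    (hθ₀ : 0 ≤ θ) (hθ : θ < π / 2) (hz : ∀ i ∈ s, |(z i).arg| ≤ θ) :
    ‖∏ i ∈ s, z i‖ ≤ ((∑ i ∈ s, z i).re / (s.card * Real.cos θ)) ^ s.card := by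
  have hcos : 0 < Real.cos θ := Real.cos_pos_of_mem_Ioo ⟨by linarith [Real.pi_pos], hθ⟩
  have hsum : (∑ i ∈ s, ‖z i‖) * Real.cos θ ≤ (∑ i ∈ s, z i).re := by
    rw [Finset.sum_mul, Complex.re_sum]
    exact Finset.sum_le_sum fun i hi =>
      Complex.norm_mul_cos_le_re (hz i hi) (by linarith [Real.pi_pos])
  rw [Complex.norm_prod]
  refine (Real.prod_le_mean_pow s _ fun i _ => norm_nonneg _).trans ?_
  refine pow_le_pow_left₀ (by positivity) ?_ _
  rw [mul_comm, ← div_div]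
  exact div_le_div_of_nonneg_right ((le_div_iff₀ hcos).2 hsum) s.card.cast_nonneg

theorem Matrix.norm_det_le_of_abs_arg_le {ι : Type*} [Fintype ι] [DecidableEq ι]
    (M : Matrix ι ι ℂ) {θ : ℝ} (hθ₀ : 0 ≤ θ) (hθ : θ < π / 2)
    (hM : ∀ μ ∈ spectrum ℂ M, |μ.arg| ≤ θ) :
    ‖M.det‖ ≤ (M.trace.re / (Fintype.card ι * Real.cos θ)) ^ Fintype.card ι := by
  have hcard : Fintype.card M.charpoly.roots = Fintype.card ι := by
    rw [Multiset.card_coe, IsAlgClosed.card_roots_eq_natDegree, Matrix.charpoly_natDegree_eq_dim]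
  rw [det_eq_prod_roots_charpoly, trace_eq_sum_roots_charpoly, Multiset.prod_eq_prod_coe,
    Multiset.sum_eq_sum_coe, ← hcard, ← Finset.card_univ]
  refine Complex.norm_prod_le_of_abs_arg_le _ _ hθ₀ hθ fun μ _ => hM μ ?_
  rw [mem_spectrum_iff_isRoot_charpoly]
  exact Polynomial.isRoot_of_mem_roots Multiset.coe_mem

theorem det_bound_relatively_D_stable (n : ℕ) (A : Matrix (Fin n) (Fin n) ℝ)
    (hdiag : ∀ i, 0 < A i i) (θ : ℝ) (hθ₀ : 0 ≤ θ) (hθ : θ < π / 2)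
    (hstab : ∀ d : Fin n → ℝ, (∀ i, 0 < d i) →
      ∀ μ ∈ spectrum ℂ ((Matrix.diagonal d * A).map (Complex.ofReal)),
        |μ.arg| ≤ θ) :
    A.det ≤ (1 / Real.cos θ ^ n) * ∏ i, A i i := by
  set d : Fin n → ℝ := fun i => (A i i)⁻¹
  set B := Matrix.diagonal d * A
  have hB_diag (i : Fin n) : B i i = 1 := by
    simp only [B, d, diagonal_mul]; exact inv_mul_cancel₀ (hdiag i).ne'
  have hB_trace : (B.map Complex.ofReal).trace.re = n := by
    simp [Matrix.trace, hB_diag]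
  have hA_det : A.det = (∏ i, A i i) * B.det := by
    rw [det_mul, det_diagonal, ← mul_assoc, Finset.prod_inv_distrib,
      mul_inv_cancel₀ (Finset.prod_pos fun i _ => hdiag i).ne', one_mul]
  have hB_det : |B.det| ≤ 1 / Real.cos θ ^ n := by
    have h := Matrix.norm_det_le_of_abs_arg_le (B.map Complex.ofReal) hθ₀ hθ
      (hstab d fun i => inv_pos.2 (hdiag i))
    rw [show (B.map Complex.ofReal).det = B.det from (RingHom.map_det Complex.ofRealHom B).symm,
      Complex.norm_real, Real.norm_eq_abs, hB_trace, Fintype.card_fin] at h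
    rcases n.eq_zero_or_pos with rfl | hn
    · simp
    · rwa [div_mul_cancel_left₀ (by positivity), ← one_div, div_pow, one_pow] at h
  rw [hA_det, mul_comm]
  exact mul_le_mul_of_nonneg_right ((le_abs_self _).trans hB_det)
    (Finset.prod_nonneg fun i _ => (hdiag i).le)
end

section
/- Let A be an n×n real matrix such that −A is relatively additive D-stable for some θ ∈ [0, π/2), i.e., every eigenvalue λ of A + D satisfies |arg λ| ≤ θ for every nonnegative diagonal matrix D. Assume moreover A is a P_0-matrix with max_i a_{ii} > 0. Then det A ≤ (max_i a_{ii} / cos θ)^n. -/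
open Real Complex Matrix

lemma root_mem_spec {n : ℕ} (M : Matrix (Fin n) (Fin n) ℂ) {μ : ℂ} (h : M.charpoly.IsRoot μ) :
    μ ∈ spectrum ℂ M := by
  rw [spectrum.mem_iff]
  intro hu
  have h1 : M.charpoly.eval μ = (Matrix.scalar (Fin n) μ - M).det := by
    rw [Matrix.charpoly, eval_det, Matrix.matPolyEquiv_charmatrix]
    simp
  have h2 : IsUnit (Matrix.scalar (Fin n) μ - M).det := by
    have := (Matrix.isUnit_iff_isUnit_det _).mp hu
    exact this
  rw [← h1, h.eq_zero] at h2
  simp at h2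

lemma amgm (k : ℕ) (hk : k ≠ 0) (z : Fin k → ℝ) (hz : ∀ i, 0 ≤ z i) :
    ∏ i, z i ≤ ((∑ i, z i) / k) ^ k := by
  have hw : ∑ _i : Fin k, (1 / k : ℝ) = 1 := by
    rw [Finset.sum_const]
    simp
    field_simp
  have h := Real.geom_mean_le_arith_mean_weighted Finset.univ (fun _ => (1/k:ℝ)) z
    (fun _ _ => by positivity) hw (fun i _ => hz i)
  have hL : (∏ i, z i ^ (1/(k:ℝ))) ^ k = ∏ i, z i := by
    rw [← Finset.prod_pow]
    refine Finset.prod_congr rfl fun i _ => ?_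
    rw [← Real.rpow_natCast (z i ^ (1/(k:ℝ))) k, ← Real.rpow_mul (hz i)]
    rw [one_div, inv_mul_cancel₀ (by exact_mod_cast hk), Real.rpow_one]
  calc ∏ i, z i = (∏ i, z i ^ (1/(k:ℝ)))^k := hL.symm
    _ ≤ (∑ i, (1/(k:ℝ)) * z i)^k :=
        pow_le_pow_left₀ (Finset.prod_nonneg fun i _ => Real.rpow_nonneg (hz i) _) h k
    _ = ((∑ i, z i)/k)^k := by rw [← Finset.mul_sum]; ring_nf

lemma multiset_amgm (s : Multiset ℝ) (hs : ∀ x ∈ s, 0 ≤ x) (hn : Multiset.card s ≠ 0) :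
    s.prod ≤ (s.sum / Multiset.card s) ^ Multiset.card s := by
  have hcoe : (↑s.toList : Multiset ℝ) = s := s.coe_toList
  rw [← hcoe, Multiset.prod_coe, Multiset.sum_coe, Multiset.coe_card]
  rw [← Fin.prod_univ_getElem, ← Fin.sum_univ_getElem]
  exact amgm _ (by rw [← Multiset.coe_card, hcoe]; exact hn) _
    (fun i => hs _ (by
      have : s.toList[(i:ℕ)] ∈ s.toList := List.getElem_mem _
      exact Multiset.mem_toList.mp this))

theorem det_bound_relatively_additive_D_stable (n : ℕ) (A : Matrix (Fin n) (Fin n) ℝ)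
    (θ : ℝ) (hθ₀ : 0 ≤ θ) (hθ : θ < π / 2)
    (hP0 : ∀ S : Finset (Fin n),
      0 ≤ (A.submatrix (fun i : {i // i ∈ S} => (i : Fin n))
        (fun i : {i // i ∈ S} => (i : Fin n))).det)
    (m : ℝ) (hm : IsGreatest (Set.range fun i => A i i) m) (hm0 : 0 < m)
    (hstab : ∀ d : Fin n → ℝ, (∀ i, 0 ≤ d i) →
      ∀ μ ∈ spectrum ℂ ((A + Matrix.diagonal d).map (Complex.ofReal)),
        |μ.arg| ≤ θ) :
    A.det ≤ (m / Real.cos θ) ^ n := by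
  have hpi := Real.pi_pos
  rcases Nat.eq_zero_or_pos n with hn | hn
  · subst hn; obtain ⟨i, -⟩ := hm.1; exact i.elim0
  have hcos : 0 < Real.cos θ := Real.cos_pos_of_mem_Ioo ⟨by linarith, hθ⟩
  set M : Matrix (Fin n) (Fin n) ℂ := A.map (Complex.ofReal) with hMdef
  -- spectrum facts
  have harg : ∀ μ ∈ M.charpoly.roots, |μ.arg| ≤ θ := by
    intro μ hμ
    have h0 : M.charpoly ≠ 0 := (Matrix.charpoly_monic M).ne_zero
    have hr := (Polynomial.mem_roots h0).mp hμ
    have hspec : μ ∈ spectrum ℂ M := root_mem_spec M hr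
    have hEq : (A + Matrix.diagonal (fun _ : Fin n => (0:ℝ))).map (Complex.ofReal) = M := by
      simp [hMdef]
    exact hstab (fun _ => 0) (fun _ => le_refl 0) μ (hEq ▸ hspec)
  have hre : ∀ μ ∈ M.charpoly.roots, ‖μ‖ * Real.cos θ ≤ μ.re := by
    intro μ hμ
    by_cases h0 : μ = 0
    · simp [h0]
    · have h1 : Real.cos μ.arg = μ.re / ‖μ‖ := Complex.cos_arg h0
      have h2 : Real.cos θ ≤ Real.cos μ.arg := by
        rw [← Real.cos_abs μ.arg]
        exact Real.cos_le_cos_of_nonneg_of_le_pi (abs_nonneg _) (by linarith) (harg μ hμ)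
      have habs : 0 < ‖μ‖ := norm_pos_iff.mpr h0
      have := mul_le_mul_of_nonneg_left h2 habs.le
      rwa [h1, mul_div_cancel₀ _ habs.ne'] at this
  have hre0 : ∀ μ ∈ M.charpoly.roots, 0 ≤ μ.re := fun μ hμ =>
    le_trans (by positivity) (hre μ hμ)
  -- cardinality
  have hcard : Multiset.card M.charpoly.roots = n := by
    have hs : M.charpoly.roots.card = M.charpoly.natDegree :=
      (Polynomial.splits_iff_card_roots).mp (IsAlgClosed.splits _)
    rw [hs, Matrix.charpoly_natDegree_eq_dim, Fintype.card_fin]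
  -- det and trace
  have hdet : (A.det : ℂ) = M.charpoly.roots.prod := by
    rw [← Matrix.det_eq_prod_roots_charpoly]
    exact RingHom.map_det Complex.ofRealHom A
  have htrace : A.trace = (M.charpoly.roots.map Complex.re).sum := by
    have h1 : M.trace = M.charpoly.roots.sum := Matrix.trace_eq_sum_roots_charpoly M
    have h2 : M.trace = ((A.trace : ℝ) : ℂ) := by
      simp [hMdef, Matrix.trace, Matrix.diag, Matrix.map_apply]
    have h3 := congrArg Complex.re (h2.symm.trans h1)
    rw [Complex.ofReal_re] at h3
    rw [h3, ← Complex.coe_reAddGroupHom, ← AddMonoidHom.map_multiset_sum]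
  -- trace bound
  have htr_le : A.trace ≤ n * m := by
    rw [Matrix.trace]
    calc ∑ i, A.diag i ≤ ∑ _i : Fin n, m :=
        Finset.sum_le_sum fun i _ => hm.2 ⟨i, rfl⟩
      _ = n * m := by simp [Finset.sum_const, mul_comm]
  -- put it together
  have hprod_re : (M.charpoly.roots.map Complex.re).prod ≤ m ^ n := by
    have h1 := multiset_amgm (M.charpoly.roots.map Complex.re)
      (by intro x hx; obtain ⟨μ, hμ, rfl⟩ := Multiset.mem_map.mp hx; exact hre0 μ hμ)
      (by rw [Multiset.card_map, hcard]; omega)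
    rw [Multiset.card_map, hcard, ← htrace] at h1
    have hsum0 : (0:ℝ) ≤ A.trace := by
      rw [htrace]
      exact Multiset.sum_nonneg (by
        intro x hx; obtain ⟨μ, hμ, rfl⟩ := Multiset.mem_map.mp hx; exact hre0 μ hμ)
    refine h1.trans (pow_le_pow_left₀ (div_nonneg hsum0 (Nat.cast_nonneg n)) ?_ n)
    rw [div_le_iff₀ (by exact_mod_cast hn)]
    calc A.trace ≤ n * m := htr_le
      _ = m * n := mul_comm _ _
  have habs_le : (M.charpoly.roots.map (fun μ : ℂ => ‖μ‖)).prod ≤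
      (M.charpoly.roots.map (fun μ => μ.re * (Real.cos θ)⁻¹)).prod := by
    apply Multiset.prod_map_le_prod_map₀
    · intro μ hμ; positivity
    · intro μ hμ
      rw [← div_eq_mul_inv, le_div_iff₀ hcos]
      exact hre μ hμ
  calc A.det ≤ |A.det| := le_abs_self _
    _ = ‖(A.det : ℂ)‖ := by rw [Complex.norm_real, Real.norm_eq_abs]
    _ = ‖M.charpoly.roots.prod‖ := by rw [hdet]
    _ = (M.charpoly.roots.map (fun μ : ℂ => ‖μ‖)).prod := map_multiset_prod (normHom (α := ℂ)) _
    _ ≤ (M.charpoly.roots.map (fun μ => μ.re * (Real.cos θ)⁻¹)).prod := habs_le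
    _ = (M.charpoly.roots.map Complex.re).prod * ((Real.cos θ)⁻¹) ^ n := by
        rw [Multiset.prod_map_mul, Multiset.map_const', Multiset.prod_replicate, hcard]
    _ ≤ m ^ n * ((Real.cos θ)⁻¹) ^ n :=
        mul_le_mul_of_nonneg_right hprod_re (by positivity)
    _ = (m / Real.cos θ) ^ n := by rw [← mul_pow, ← div_eq_mul_inv]
end

section
/- Let A and B be n×n real symmetric positive definite matrices and X an n×n real matrix. If the operator norm satisfies ‖X‖ < 1/√(‖A^{-1}‖ ‖B^{-1}‖), then the 2n×2n block matrix [[A, X],[Xᵀ, B]] is positive definite. -/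
open Matrix

/-- The operator (spectral) norm of a real matrix, induced by the Euclidean norm. -/
noncomputable def opNorm {n : ℕ} (A : Matrix (Fin n) (Fin n) ℝ) : ℝ :=
  ‖Matrix.toEuclideanCLM (𝕜 := ℝ) (n := Fin n) A‖

/-!
Write `a = ‖A⁻¹‖`, `b = ‖B⁻¹‖`. If `B = S²` with `S = √B`, then `‖y‖ ≤ ‖S⁻¹‖ ‖S y‖` and
`‖S⁻¹‖² = ‖B⁻¹‖` by the C⋆-identity, so `yᵀ B y = ‖S y‖² ≥ ‖y‖² / b`; likewise `xᵀ A x ≥ ‖x‖² / a`.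
Together with `|xᵀ X y| ≤ ‖X‖ ‖x‖ ‖y‖`, the quadratic form of the block matrix at `(x, y)` is at least
`‖x‖² / a + ‖y‖² / b - 2 ‖X‖ ‖x‖ ‖y‖`, a binary quadratic form in `(‖x‖, ‖y‖)` whose discriminant
is negative exactly when `‖X‖² a b < 1`.
-/

open scoped MatrixOrder Matrix.Norms.L2Operator
open WithLp

lemma two_mul_mul_mul_lt_sq_div_add_sq_div {a b c p q : ℝ} (ha : 0 ≤ a) (hb : 0 ≤ b)
    (hc : 0 ≤ c) (hcab : c < 1 / √(a * b)) (hp : 0 ≤ p) (hq : 0 ≤ q) (hpq : p ≠ 0 ∨ q ≠ 0) :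
    2 * c * p * q < p ^ 2 / a + q ^ 2 / b := by
  have hsqrt : 0 < √(a * b) := one_div_pos.1 (hc.trans_lt hcab)
  have hab : 0 < a * b := Real.sqrt_pos.1 hsqrt
  have ha' : 0 < a := ha.lt_of_ne (by rintro rfl; simp at hab)
  have hb' : 0 < b := hb.lt_of_ne (by rintro rfl; simp at hab)
  have hc2 : c ^ 2 * (a * b) < 1 := by
    have h : c * √(a * b) < 1 := (lt_div_iff₀ hsqrt).1 hcab
    have h2 : (c * √(a * b)) ^ 2 < 1 := by nlinarith [mul_nonneg hc hsqrt.le]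
    rwa [mul_pow, Real.sq_sqrt hab.le] at h2
  rw [div_add_div _ _ ha'.ne' hb'.ne', lt_div_iff₀ hab]
  -- `a (b p² + a q² - 2 c a b p q) = (a q - c a b p)² + a b (1 - c² a b) p²`, and symmetrically.
  rcases hpq with hp0 | hq0
  · have hp' : 0 < p := hp.lt_of_ne (Ne.symm hp0)
    nlinarith [sq_nonneg (a * q - c * a * b * p),
      mul_pos (mul_pos hab (pow_pos hp' 2)) (sub_pos.2 hc2)]
  · have hq' : 0 < q := hq.lt_of_ne (Ne.symm hq0)
    nlinarith [sq_nonneg (b * p - c * a * b * q),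
      mul_pos (mul_pos hab (pow_pos hq' 2)) (sub_pos.2 hc2)]

namespace Matrix

variable {ι κ : Type*} [Fintype ι] [Fintype κ]

lemma sumElim_dotProduct_fromBlocks_mulVec_sumElim {R : Type*} [CommSemiring R]
    (A : Matrix ι ι R) (X : Matrix ι κ R) (B : Matrix κ κ R) (x : ι → R) (y : κ → R) :
    Sum.elim x y ⬝ᵥ fromBlocks A X Xᵀ B *ᵥ Sum.elim x y =
      x ⬝ᵥ A *ᵥ x + 2 * (x ⬝ᵥ X *ᵥ y) + y ⬝ᵥ B *ᵥ y := by
  rw [fromBlocks_mulVec, Sum.elim_comp_inl, Sum.elim_comp_inr, sumElim_dotProduct_sumElim,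
    dotProduct_add, dotProduct_add, mulVec_transpose, dotProduct_comm y, ← dotProduct_mulVec]
  ring

lemma dotProduct_self_eq_norm_sq (x : ι → ℝ) : x ⬝ᵥ x = ‖toLp 2 x‖ ^ 2 := by
  rw [← real_inner_self_eq_norm_sq, EuclideanSpace.inner_toLp_toLp, star_trivial]

lemma norm_toLp_mulVec_le [DecidableEq κ] (M : Matrix ι κ ℝ) (x : κ → ℝ) :
    ‖toLp 2 (M *ᵥ x)‖ ≤ ‖M‖ * ‖toLp 2 x‖ :=
  l2_opNorm_mulVec M (toLp 2 x)

lemma abs_dotProduct_mulVec_le [DecidableEq κ] (M : Matrix ι κ ℝ) (x : ι → ℝ) (y : κ → ℝ) :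
    |x ⬝ᵥ M *ᵥ y| ≤ ‖M‖ * ‖toLp 2 x‖ * ‖toLp 2 y‖ := by
  calc |x ⬝ᵥ M *ᵥ y| = |inner ℝ (toLp 2 x) (toLp 2 (M *ᵥ y))| := by
        rw [EuclideanSpace.inner_toLp_toLp, star_trivial, dotProduct_comm]
    _ ≤ ‖toLp 2 x‖ * ‖toLp 2 (M *ᵥ y)‖ := abs_real_inner_le_norm _ _
    _ ≤ ‖toLp 2 x‖ * (‖M‖ * ‖toLp 2 y‖) := by gcongr; exact norm_toLp_mulVec_le M y
    _ = ‖M‖ * ‖toLp 2 x‖ * ‖toLp 2 y‖ := by ring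

variable [DecidableEq ι] {B : Matrix ι ι ℝ}

lemma PosDef.norm_sq_le_norm_inv_mul (hB : B.PosDef) (x : ι → ℝ) :
    ‖toLp 2 x‖ ^ 2 ≤ ‖B⁻¹‖ * (x ⬝ᵥ B *ᵥ x) := by
  set S := CFC.sqrt B
  have hS : Sᴴ = S := (CFC.sqrt_nonneg B).isSelfAdjoint
  have hSS : S * S = B := CFC.sqrt_mul_sqrt_self B hB.posSemidef.nonneg
  have hSunit : IsUnit S := (CFC.isUnit_sqrt_iff B hB.posSemidef.nonneg).2 hB.isUnit
  have hquad : x ⬝ᵥ B *ᵥ x = ‖toLp 2 (S *ᵥ x)‖ ^ 2 := by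
    rw [← dotProduct_self_eq_norm_sq, ← hSS, ← mulVec_mulVec, dotProduct_mulVec,
      ← mulVec_transpose, ← conjTranspose_eq_transpose_of_trivial, hS]
  have hinv : ‖S⁻¹‖ ^ 2 = ‖B⁻¹‖ := by
    rw [sq, ← l2_opNorm_conjTranspose_mul_self, conjTranspose_nonsing_inv, hS, ← mul_inv_rev, hSS]
  have hx : x = S⁻¹ *ᵥ (S *ᵥ x) := by
    rw [mulVec_mulVec, nonsing_inv_mul S ((isUnit_iff_isUnit_det S).1 hSunit), one_mulVec]
  calc ‖toLp 2 x‖ ^ 2 ≤ (‖S⁻¹‖ * ‖toLp 2 (S *ᵥ x)‖) ^ 2 := by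
        gcongr
        conv_lhs => rw [hx]
        exact norm_toLp_mulVec_le _ _
    _ = ‖B⁻¹‖ * (x ⬝ᵥ B *ᵥ x) := by rw [mul_pow, hinv, hquad]

lemma PosDef.norm_sq_div_norm_inv_le (hB : B.PosDef) (x : ι → ℝ) :
    ‖toLp 2 x‖ ^ 2 / ‖B⁻¹‖ ≤ x ⬝ᵥ B *ᵥ x := by
  refine div_le_of_le_mul₀ (norm_nonneg _) ?_ ?_
  · simpa using hB.posSemidef.dotProduct_mulVec_nonneg x
  · simpa only [mul_comm] using hB.norm_sq_le_norm_inv_mul x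

end Matrix

theorem blockMatrix_posDef_of_norm_lt (n : ℕ) (A B X : Matrix (Fin n) (Fin n) ℝ)
    (hA : A.PosDef) (hB : B.PosDef)
    (hX : opNorm X < 1 / Real.sqrt (opNorm A⁻¹ * opNorm B⁻¹)) :
    (Matrix.fromBlocks A X Xᵀ B).PosDef := by
  change ‖X‖ < 1 / √(‖A⁻¹‖ * ‖B⁻¹‖) at hX
  refine posDef_iff_dotProduct_mulVec.2
    ⟨hA.1.fromBlocks (conjTranspose_eq_transpose_of_trivial X) hB.1, fun z hz => ?_⟩
  obtain ⟨x, y, rfl⟩ : ∃ x y, z = Sum.elim x y := ⟨_, _, (Sum.elim_comp_inl_inr z).symm⟩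
  rw [star_trivial, sumElim_dotProduct_fromBlocks_mulVec_sumElim]
  have hxy : ‖toLp 2 x‖ ≠ 0 ∨ ‖toLp 2 y‖ ≠ 0 := by
    contrapose! hz
    simp only [norm_eq_zero, toLp_eq_zero] at hz
    rw [hz.1, hz.2, Sum.elim_zero_zero]
  have hcross := neg_le_of_abs_le (abs_dotProduct_mulVec_le X x y)
  have hgap := two_mul_mul_mul_lt_sq_div_add_sq_div (norm_nonneg _) (norm_nonneg _)
    (norm_nonneg _) hX (norm_nonneg _) (norm_nonneg _) hxy
  linarith [hA.norm_sq_div_norm_inv_le x, hB.norm_sq_div_norm_inv_le y]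
end

section
/- Let A, B be n×n symmetric positive definite real matrices and X an n×n real matrix. The block matrix [[A, X],[Xᵀ, B]] is positive definite if and only if X = A^{1/2} K B^{1/2} for some matrix K with operator norm ‖K‖ < 1. -/
/-!
Let `S = A^{1/2}` and `T = B^{1/2}`, and write `X = S K T` (`S`, `T` are invertible). The block
matrix is then the congruence `diag(S, T) * [[1, K], [Kᵀ, 1]] * diag(S, T)`, so it is positive
definite iff `[[1, K], [Kᵀ, 1]]` is, iff its Schur complement `1 - Kᵀ K` is. As `Kᵀ K ≥ 0` and its
operator norm `‖K‖²` is the largest point of its spectrum, this happens iff `‖K‖ < 1`.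
-/

open Matrix

/-- The square root of a positive semidefinite matrix, as defined in the older Mathlib
(`Matrix.PosSemidef.sqrt`, since removed). -/
noncomputable def Matrix.PosSemidef.sqrt {n : Type*} [Fintype n] [DecidableEq n]
    {A : Matrix n n ℝ} (hA : A.PosSemidef) : Matrix n n ℝ :=
  hA.1.eigenvectorUnitary.1 * diagonal ((↑) ∘ (√·) ∘ hA.1.eigenvalues) *
    (star hA.1.eigenvectorUnitary : Matrix n n ℝ)

open scoped MatrixOrder ComplexOrder

open IsometricContinuousFunctionalCalculus in
theorem isStrictlyPositive_one_sub_iff_norm_lt_one {A : Type*} [NormedRing A] [StarRing A]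
    [NormedAlgebra ℝ A] [PartialOrder A] [StarOrderedRing A]
    [IsometricContinuousFunctionalCalculus ℝ A IsSelfAdjoint] [NonnegSpectrumClass ℝ A]
    {a : A} (ha : 0 ≤ a) : IsStrictlyPositive (1 - a) ↔ ‖a‖ < 1 := by
  rw [StarOrderedRing.isStrictlyPositive_iff_spectrum_pos (R := ℝ) (1 - a),
    ← map_one (algebraMap ℝ A), ← spectrum.singleton_sub_eq]
  simp only [Set.singleton_sub, Set.mem_image, forall_exists_index, and_imp,
    forall_apply_eq_imp_iff₂, sub_pos]
  obtain _ | _ := subsingleton_or_nontrivial A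
  · simp [Subsingleton.elim a 0, spectrum.of_subsingleton]
  refine ⟨fun h => ?_, fun h y hy => ?_⟩
  · obtain ⟨⟨y, hy, hya⟩, -⟩ := isGreatest_norm_spectrum (𝕜 := ℝ) (p := IsSelfAdjoint) a
    simpa [← hya, Real.norm_of_nonneg (spectrum_nonneg_of_nonneg ha hy)] using h y hy
  · exact (le_abs_self y).trans_lt ((norm_spectrum_le (p := IsSelfAdjoint) a hy).trans_lt h)

open scoped Matrix.Norms.L2Operator in
theorem opNorm_lt_one_iff {n : ℕ} (K : Matrix (Fin n) (Fin n) ℝ) :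
    opNorm K < 1 ↔ (1 - Kᴴ * K).PosDef := by
  rw [← isStrictlyPositive_iff_posDef, ← star_eq_conjTranspose,
    isStrictlyPositive_one_sub_iff_norm_lt_one (star_mul_self_nonneg K),
    CStarRing.norm_star_mul_self]
  change ‖K‖ < 1 ↔ _
  simpa using mul_self_lt_mul_self_iff (norm_nonneg K) zero_le_one

namespace Matrix

section Sqrt

variable {n : Type*} [Fintype n] [DecidableEq n]

theorem PosSemidef.sqrt_eq_cfcSqrt {A : Matrix n n ℝ} (hA : A.PosSemidef) :
    hA.sqrt = CFC.sqrt A := by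
  rw [CFC.sqrt_eq_cfc, cfc_nnreal_eq_real _ A, hA.1.cfc_eq]
  simp only [IsHermitian.cfc, PosSemidef.sqrt, Unitary.conjStarAlgAut_apply]
  congr 3
  funext i
  simp [max_eq_left (hA.eigenvalues_nonneg i)]

theorem PosSemidef.sqrt_mul_self {A : Matrix n n ℝ} (hA : A.PosSemidef) :
    hA.sqrt * hA.sqrt = A := by
  rw [hA.sqrt_eq_cfcSqrt]
  exact CFC.sqrt_mul_sqrt_self A hA.nonneg

theorem PosDef.posDef_sqrt {A : Matrix n n ℝ} (hA : A.PosDef) : hA.posSemidef.sqrt.PosDef := by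
  rw [PosSemidef.sqrt_eq_cfcSqrt, ← isStrictlyPositive_iff_posDef]
  exact hA.isStrictlyPositive.sqrt

end Sqrt

variable {𝕜 m n : Type*} [RCLike 𝕜] [Fintype m] [DecidableEq m] [Fintype n] [DecidableEq n]

theorem posDef_iff_posSemidef_and_det_ne_zero {M : Matrix n n 𝕜} :
    M.PosDef ↔ M.PosSemidef ∧ M.det ≠ 0 :=
  ⟨fun h => ⟨h.posSemidef, h.posSemidef.posDef_iff_det_ne_zero.mp h⟩,
    fun h => h.1.posDef_iff_det_ne_zero.mpr h.2⟩

theorem PosDef.fromBlocks₁₁_posDef_iff {A : Matrix m m 𝕜} (B : Matrix m n 𝕜)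
    (D : Matrix n n 𝕜) (hA : A.PosDef) [Invertible A] :
    (fromBlocks A B Bᴴ D).PosDef ↔ (D - Bᴴ * A⁻¹ * B).PosDef := by
  rw [posDef_iff_posSemidef_and_det_ne_zero, posDef_iff_posSemidef_and_det_ne_zero,
    hA.fromBlocks₁₁ B D, det_fromBlocks₁₁, invOf_eq_nonsing_inv, mul_ne_zero_iff,
    and_iff_right hA.det_pos.ne']

theorem posDef_fromBlocks_one_iff (K : Matrix m n 𝕜) :
    (fromBlocks 1 K Kᴴ 1).PosDef ↔ (1 - Kᴴ * K).PosDef := by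
  let : Invertible (1 : Matrix m m 𝕜) := invertibleOne
  simpa using PosDef.fromBlocks₁₁_posDef_iff K 1 PosDef.one

theorem posDef_fromBlocks_conj_iff {S : Matrix m m 𝕜} {T : Matrix n n 𝕜} (hS : IsUnit S)
    (hT : IsUnit T) (K : Matrix m n 𝕜) :
    (fromBlocks (Sᴴ * S) (Sᴴ * K * T) (Sᴴ * K * T)ᴴ (Tᴴ * T)).PosDef ↔
      (1 - Kᴴ * K).PosDef := by
  have hST : IsUnit (fromBlocks S 0 0 T) := by
    rw [isUnit_iff_isUnit_det, det_fromBlocks_zero₂₁]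
    exact (S.isUnit_iff_isUnit_det.mp hS).mul (T.isUnit_iff_isUnit_det.mp hT)
  have hconj : star (fromBlocks S 0 0 T) * fromBlocks 1 K Kᴴ 1 * fromBlocks S 0 0 T =
      fromBlocks (Sᴴ * S) (Sᴴ * K * T) (Sᴴ * K * T)ᴴ (Tᴴ * T) := by
    simp [star_eq_conjTranspose, fromBlocks_conjTranspose, fromBlocks_multiply,
      Matrix.mul_assoc]
  rw [← hconj, hST.posDef_star_left_conjugate_iff, posDef_fromBlocks_one_iff]

theorem posDef_fromBlocks_iff_exists {S : Matrix m m 𝕜} {T : Matrix n n 𝕜} (hS : IsUnit S)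
    (hT : IsUnit T) (X : Matrix m n 𝕜) :
    (fromBlocks (Sᴴ * S) X Xᴴ (Tᴴ * T)).PosDef ↔
      ∃ K : Matrix m n 𝕜, (1 - Kᴴ * K).PosDef ∧ X = Sᴴ * K * T := by
  refine ⟨fun h => ?_, fun ⟨K, hK, hX⟩ => hX ▸ (posDef_fromBlocks_conj_iff hS hT K).mpr hK⟩
  obtain ⟨K, rfl⟩ : ∃ K : Matrix m n 𝕜, X = Sᴴ * K * T := by
    have hS' : IsUnit Sᴴ.det := by simpa [isUnit_iff_isUnit_det] using hS.star
    have hT' : IsUnit T.det := T.isUnit_iff_isUnit_det.mp hT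
    refine ⟨Sᴴ⁻¹ * X * T⁻¹, ?_⟩
    rw [Matrix.mul_assoc, Matrix.mul_assoc, nonsing_inv_mul _ hT', Matrix.mul_one,
      mul_nonsing_inv_cancel_left _ _ hS']
  exact ⟨K, (posDef_fromBlocks_conj_iff hS hT K).mp h, rfl⟩

end Matrix

theorem blockMatrix_posDef_iff (n : ℕ) (A B X : Matrix (Fin n) (Fin n) ℝ)
    (hA : A.PosDef) (hB : B.PosDef) :
    (Matrix.fromBlocks A X Xᵀ B).PosDef ↔
      ∃ K : Matrix (Fin n) (Fin n) ℝ, opNorm K < 1 ∧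
        X = hA.posSemidef.sqrt * K * hB.posSemidef.sqrt := by
  set S := hA.posSemidef.sqrt
  set T := hB.posSemidef.sqrt
  have hS : S.PosDef := hA.posDef_sqrt
  have hT : T.PosDef := hB.posDef_sqrt
  have hSA : Sᴴ * S = A := by rw [hS.1.eq, hA.posSemidef.sqrt_mul_self]
  have hTB : Tᴴ * T = B := by rw [hT.1.eq, hB.posSemidef.sqrt_mul_self]
  rw [← conjTranspose_eq_transpose_of_trivial, ← hSA, ← hTB,
    posDef_fromBlocks_iff_exists hS.isUnit hT.isUnit, hS.1.eq]
  simp only [opNorm_lt_one_iff]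
end

section
/- Let A be a 2×2 real P-matrix (a_{11} > 0, a_{22} > 0, det A > 0). Then the following are equivalent: (i) for every positive diagonal matrix D = diag(d₁, d₂), the matrix (DA)² has positive trace and positive determinant (is a Q-matrix); (ii) det A < 2 a_{11} a_{22}. -/
open Matrix

theorem two_by_two_Q2_iff_det_bound (A : Matrix (Fin 2) (Fin 2) ℝ)
    (h11 : 0 < A 0 0) (h22 : 0 < A 1 1) (hdet : 0 < A.det) :
    (∀ d₁ d₂ : ℝ, 0 < d₁ → 0 < d₂ →
        0 < Matrix.trace ((Matrix.diagonal ![d₁, d₂] * A) ^ 2) ∧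
        0 < ((Matrix.diagonal ![d₁, d₂] * A) ^ 2).det) ↔
      A.det < 2 * A 0 0 * A 1 1 := by
  rw [Matrix.det_fin_two] at hdet ⊢
  have key : ∀ d₁ d₂ : ℝ,
      Matrix.trace ((Matrix.diagonal ![d₁, d₂] * A) ^ 2)
        = d₁^2 * (A 0 0)^2 + d₂^2 * (A 1 1)^2 + 2 * d₁ * d₂ * (A 0 1 * A 1 0) ∧
      ((Matrix.diagonal ![d₁, d₂] * A) ^ 2).det
        = (d₁ * d₂ * (A 0 0 * A 1 1 - A 0 1 * A 1 0))^2 := by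
    intro d₁ d₂
    constructor
    · rw [pow_two, Matrix.trace_fin_two]
      simp [Matrix.mul_apply, Fin.sum_univ_two, Matrix.diagonal]
      ring
    · rw [pow_two, Matrix.det_mul, Matrix.det_mul, Matrix.det_fin_two,
        Matrix.det_fin_two]
      simp [Matrix.mul_apply, Fin.sum_univ_two, Matrix.diagonal]
      ring
  constructor
  · intro h
    have h2 := (h (A 1 1) (A 0 0) h22 h11).1
    rw [(key (A 1 1) (A 0 0)).1] at h2
    nlinarith [mul_pos h11 h22]
  · intro hb d₁ d₂ hd₁ hd₂
    obtain ⟨ht, hd⟩ := key d₁ d₂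
    rw [ht, hd]
    constructor
    · nlinarith [sq_nonneg (d₁ * A 0 0 - d₂ * A 1 1), mul_pos hd₁ hd₂]
    · positivity
end

section
/- Let A be an n×n real matrix such that Sym(A) = (A+Aᵀ)/2 is positive definite. Set κ = ‖Skew(A)‖ · ‖(Sym(A))^{-1}‖, where ‖·‖ is the spectral norm. Then det A ≤ (κ² + 1)^{n/2} ∏_{i=1}^n a_{ii}. -/
/-!
Write `A = S + K` with `S = Sym(A)`, `K = Skew(A)`, and let `R = √S`. Then `A = R (1 + B) R` with
`B = R⁻¹ K R⁻¹` skew-symmetric, so `det A = det S · det (1 + B)` and `‖B‖ ≤ ‖K‖ ‖R⁻¹‖² = ‖K‖ ‖S⁻¹‖`.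
Skewness gives `(1 + B)ᵀ (1 + B) = 1 + Bᵀ B`, hence `‖1 + B‖² ≤ 1 + ‖B‖²`, and `|det X| ≤ ‖X‖ⁿ`
(the eigenvalues of `Xᵀ X` are at most `‖X‖²`) bounds `det (1 + B)` by `(1 + ‖B‖²)^(n/2)`.
Finally `det S ≤ ∏ Sᵢᵢ = ∏ aᵢᵢ` is Hadamard's inequality: after rescaling `S` to unit diagonal
its trace is `n`, and `λ ≤ exp (λ - 1)` for each eigenvalue gives determinant at most `1`.
-/

open Real Matrix

/-- Symmetric part of a matrix. -/
noncomputable def symPart {n : ℕ} (M : Matrix (Fin n) (Fin n) ℝ) :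
    Matrix (Fin n) (Fin n) ℝ := (2 : ℝ)⁻¹ • (M + Mᵀ)

/-- Skew-symmetric part of a matrix. -/
noncomputable def skewPart {n : ℕ} (M : Matrix (Fin n) (Fin n) ℝ) :
    Matrix (Fin n) (Fin n) ℝ := (2 : ℝ)⁻¹ • (M - Mᵀ)

open scoped Matrix.Norms.L2Operator MatrixOrder

namespace Matrix

variable {n : Type*} [Fintype n] [DecidableEq n]

lemma PosSemidef.det_le_exp_trace_sub_card {M : Matrix n n ℝ} (hM : M.PosSemidef) :
    M.det ≤ exp (M.trace - Fintype.card n) := by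
  rw [hM.1.det_eq_prod_eigenvalues, hM.1.trace_eq_sum_eigenvalues]
  simp only [RCLike.ofReal_real_eq_id, id]
  calc ∏ i, hM.1.eigenvalues i ≤ ∏ i, exp (hM.1.eigenvalues i - 1) :=
        Finset.prod_le_prod (fun i _ => hM.eigenvalues_nonneg i)
          fun i _ => by linarith [add_one_le_exp (hM.1.eigenvalues i - 1)]
    _ = exp (∑ i, hM.1.eigenvalues i - Fintype.card n) := by
        rw [← exp_sum, Finset.sum_sub_distrib]; simp

lemma IsHermitian.abs_det_le_l2_opNorm_pow {M : Matrix n n ℝ} (hM : M.IsHermitian) :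
    |M.det| ≤ ‖M‖ ^ Fintype.card n := by
  rw [hM.det_eq_prod_eigenvalues, Finset.abs_prod, ← Finset.card_univ, ← Finset.prod_const]
  refine Finset.prod_le_prod (fun i _ => abs_nonneg _) fun i _ => ?_
  -- the spectral bound needs `‖1‖ = 1`, which fails for an empty index type
  have : Nonempty n := ⟨i⟩
  exact spectrum.norm_le_norm_of_mem (hM.eigenvalues_mem_spectrum_real i)

lemma abs_det_le_l2_opNorm_pow (X : Matrix n n ℝ) : |X.det| ≤ ‖X‖ ^ Fintype.card n := by
  have hsq : |X.det| ^ 2 ≤ (‖X‖ ^ Fintype.card n) ^ 2 :=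
    calc |X.det| ^ 2 = (Xᴴ * X).det := by
          rw [sq_abs, det_mul, det_conjTranspose, star_trivial, sq]
      _ ≤ |(Xᴴ * X).det| := le_abs_self _
      _ ≤ ‖Xᴴ * X‖ ^ Fintype.card n :=
          (isHermitian_conjTranspose_mul_self X).abs_det_le_l2_opNorm_pow
      _ = (‖X‖ ^ Fintype.card n) ^ 2 := by
          rw [l2_opNorm_conjTranspose_mul_self, ← sq, ← pow_mul, ← pow_mul, mul_comm]
  exact (pow_le_pow_iff_left₀ (abs_nonneg _) (by positivity) two_ne_zero).1 hsq

lemma l2_opNorm_one_le : ‖(1 : Matrix n n ℝ)‖ ≤ 1 := by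
  rcases isEmpty_or_nonempty n with hn | hn
  · simp [Subsingleton.elim (1 : Matrix n n ℝ) 0]
  · simp

lemma l2_opNorm_one_add_sq_le_of_transpose_eq_neg {B : Matrix n n ℝ} (hB : Bᵀ = -B) :
    ‖1 + B‖ ^ 2 ≤ 1 + ‖B‖ ^ 2 := by
  have hBH : Bᴴ = -B := by rw [conjTranspose_eq_transpose_of_trivial, hB]
  calc ‖1 + B‖ ^ 2 = ‖1 + Bᴴ * B‖ := by
        rw [sq, ← l2_opNorm_conjTranspose_mul_self, conjTranspose_add, conjTranspose_one, hBH]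
        congr 1; noncomm_ring
    _ ≤ ‖(1 : Matrix n n ℝ)‖ + ‖Bᴴ * B‖ := norm_add_le _ _
    _ ≤ 1 + ‖B‖ ^ 2 := by
        rw [l2_opNorm_conjTranspose_mul_self, ← sq]; linarith [l2_opNorm_one_le (n := n)]

lemma PosDef.det_le_prod_diag {S : Matrix n n ℝ} (hS : S.PosDef) : S.det ≤ ∏ i, S i i := by
  set d : n → ℝ := fun i => (√(S i i))⁻¹
  have hd : ∀ i, d i * S i i * d i = 1 := fun i => by
    have hSi : 0 < S i i := hS.diag_pos
    simp only [d]
    field_simp [(sqrt_pos.2 hSi).ne']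
    exact (sq_sqrt hSi.le).symm
  have hM : ((diagonal d)ᴴ * S * diagonal d).PosSemidef :=
    hS.posSemidef.conjTranspose_mul_mul_same _
  have hunit : ((diagonal d)ᴴ * S * diagonal d).trace = Fintype.card n := by
    simp [trace, hd]
  have hdet : ((diagonal d)ᴴ * S * diagonal d).det = (∏ i, d i) ^ 2 * S.det := by
    simp only [conjTranspose_eq_transpose_of_trivial, diagonal_transpose, det_mul, det_diagonal]
    ring
  have hprod : (∏ i, d i) ^ 2 * ∏ i, S i i = 1 := by
    rw [← Finset.prod_pow, ← Finset.prod_mul_distrib]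
    exact Finset.prod_eq_one fun i _ => by rw [sq, ← hd i]; ring
  have hpos : 0 < (∏ i, d i) ^ 2 :=
    pow_pos (Finset.prod_pos fun i _ => inv_pos.2 (sqrt_pos.2 hS.diag_pos)) 2
  have hle := hM.det_le_exp_trace_sub_card
  rw [hunit, hdet, sub_self, exp_zero, ← hprod] at hle
  exact le_of_mul_le_mul_left hle hpos

lemma l2_opNorm_conjTranspose_mul_mul_self_le (X K : Matrix n n ℝ) :
    ‖Xᴴ * K * X‖ ≤ ‖K‖ * ‖Xᴴ * X‖ := by
  rw [l2_opNorm_conjTranspose_mul_self]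
  calc ‖Xᴴ * K * X‖ ≤ ‖Xᴴ‖ * ‖K‖ * ‖X‖ := by
        grw [l2_opNorm_mul, l2_opNorm_mul]
    _ = ‖K‖ * (‖X‖ * ‖X‖) := by rw [l2_opNorm_conjTranspose]; ring

lemma det_one_add_le_of_transpose_eq_neg {B : Matrix n n ℝ} (hB : Bᵀ = -B) :
    (1 + B).det ≤ (1 + ‖B‖ ^ 2) ^ ((Fintype.card n : ℝ) / 2) := by
  calc (1 + B).det ≤ ‖1 + B‖ ^ Fintype.card n := (le_abs_self _).trans (abs_det_le_l2_opNorm_pow _)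
    _ = (‖1 + B‖ ^ 2) ^ ((Fintype.card n : ℝ) / 2) := by
        rw [← rpow_natCast, ← rpow_natCast, ← rpow_mul (norm_nonneg _)]; push_cast; ring_nf
    _ ≤ (1 + ‖B‖ ^ 2) ^ ((Fintype.card n : ℝ) / 2) := by
        gcongr; exact l2_opNorm_one_add_sq_le_of_transpose_eq_neg hB

lemma det_add_le_of_posDef_of_transpose_eq_neg {S K : Matrix n n ℝ} (hS : S.PosDef)
    (hK : Kᵀ = -K) :
    (S + K).det ≤ ((‖K‖ * ‖S⁻¹‖) ^ 2 + 1) ^ ((Fintype.card n : ℝ) / 2) * S.det := by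
  set R := CFC.sqrt S
  have hRR : R * R = S := CFC.sqrt_mul_sqrt_self S hS.posSemidef.nonneg
  have hRH : Rᴴ = R := (CFC.sqrt_nonneg S).posSemidef.1
  have hR : IsUnit R.det := by
    rw [isUnit_iff_ne_zero]; intro h
    simpa [← hRR, det_mul, h] using hS.det_pos
  set B := R⁻¹ * K * R⁻¹
  have hfactor : S + K = R * (1 + B) * R := by
    simp only [B, mul_add, add_mul, mul_one, hRR, ← mul_assoc, mul_nonsing_inv _ hR, one_mul]
    rw [mul_assoc, nonsing_inv_mul _ hR, mul_one]
  have hRinvH : R⁻¹ᴴ = R⁻¹ := by rw [conjTranspose_nonsing_inv, hRH]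
  have hB : Bᵀ = -B := by
    rw [← conjTranspose_eq_transpose_of_trivial] at hK ⊢
    simp only [B, conjTranspose_mul, hRinvH, hK, mul_neg, neg_mul, mul_assoc]
  have hnormB : ‖B‖ ≤ ‖K‖ * ‖S⁻¹‖ := by
    have := l2_opNorm_conjTranspose_mul_mul_self_le R⁻¹ K
    rwa [hRinvH, ← mul_inv_rev, hRR] at this
  calc (S + K).det = (1 + B).det * S.det := by rw [hfactor, ← hRR]; simp only [det_mul]; ring
    _ ≤ (1 + ‖B‖ ^ 2) ^ ((Fintype.card n : ℝ) / 2) * S.det :=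
        mul_le_mul_of_nonneg_right (det_one_add_le_of_transpose_eq_neg hB) hS.det_pos.le
    _ ≤ ((‖K‖ * ‖S⁻¹‖) ^ 2 + 1) ^ ((Fintype.card n : ℝ) / 2) * S.det := by
        rw [add_comm]; gcongr; exact hS.det_pos.le

end Matrix

theorem det_bound_posdef_nonsymmetric (n : ℕ) (A : Matrix (Fin n) (Fin n) ℝ)
    (hSym : (symPart A).PosDef) :
    A.det ≤ ((opNorm (skewPart A) * opNorm (symPart A)⁻¹) ^ 2 + 1) ^ ((n : ℝ) / 2) *
      ∏ i, A i i := by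
  have hA : A = symPart A + skewPart A := by
    unfold symPart skewPart
    module
  have hskew : (skewPart A)ᵀ = -skewPart A := by
    simp only [skewPart, transpose_smul, transpose_sub, transpose_transpose, ← smul_neg, neg_sub]
  have hdiag : ∀ i, symPart A i i = A i i := fun i => by
    simp only [symPart, Matrix.smul_apply, Matrix.add_apply, transpose_apply, smul_eq_mul]
    ring
  calc A.det = (symPart A + skewPart A).det := by rw [← hA]
    _ ≤ ((opNorm (skewPart A) * opNorm (symPart A)⁻¹) ^ 2 + 1) ^ ((n : ℝ) / 2) *
          (symPart A).det := by
        have := det_add_le_of_posDef_of_transpose_eq_neg hSym hskew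
        rwa [Fintype.card_fin] at this
    _ ≤ ((opNorm (skewPart A) * opNorm (symPart A)⁻¹) ^ 2 + 1) ^ ((n : ℝ) / 2) *
          ∏ i, A i i := by
        simp only [← hdiag]
        gcongr
        exact hSym.det_le_prod_diag
end
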